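/- Bounds on the symplectic eigenvalues: Let M ∈ ℝ^{2n×2n} be positive definite symmetric with symplectic eigenvalues d₁ ≥ … ≥ dₙ > 0. Then d₁ ≤ ‖M‖∞ and dₙ ≥ 1/‖M⁻¹‖∞; equivalently, ‖D̃‖∞ ≤ ‖M‖∞ and ‖D̃⁻¹‖∞ ≤ ‖M⁻¹‖∞ for the Williamson diagonal form D̃ = diag(D,D). -/

import Mathlib

open Matrix

/-- The standard symplectic form σ = [[0, Iₙ], [−Iₙ, 0]] on ℝ^{2n},
indexed by `Fin n ⊕ Fin n`. -/
def symplJ (n : ℕ) : Matrix (Fin n ⊕ Fin n) (Fin n ⊕ Fin n) ℝ :=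
  Matrix.fromBlocks 0 1 (-1) 0

/-- `S ∈ Sp(2n)`: a real `2n × 2n` matrix with `Sᵀ σ S = σ`. -/
def IsSymplectic {n : ℕ} (S : Matrix (Fin n ⊕ Fin n) (Fin n ⊕ Fin n) ℝ) : Prop :=
  Sᵀ * symplJ n * S = symplJ n

/-- The block-diagonal matrix `diag(D, D)` built from the diagonal entries `d`. -/
def Dtilde {n : ℕ} (d : Fin n → ℝ) : Matrix (Fin n ⊕ Fin n) (Fin n ⊕ Fin n) ℝ :=
  Matrix.fromBlocks (Matrix.diagonal d) 0 0 (Matrix.diagonal d)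

/-- The operator (spectral) norm `‖·‖∞` of a matrix, i.e. the norm of the induced
linear map on Euclidean space. -/
noncomputable def opNorm {𝕜 : Type*} [RCLike 𝕜] {ι : Type*} [Fintype ι] [DecidableEq ι]
    (A : Matrix ι ι 𝕜) : ℝ :=
  ‖LinearMap.toContinuousLinearMap (Matrix.toEuclideanLin A)‖

/-! If `Sᵀ M S = diag(D, D)` with `S` symplectic, the columns `u = S eᵢ`, `v = S e_{n+i}` satisfy
`uᵀ M u = vᵀ M v = dᵢ` and `uᵀ σ v = 1`. As `σ` is orthogonal, `1 ≤ |u|² |v|²`, while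
`|x|² ≤ ‖M⁻¹‖ xᵀ M x` for every `x`; hence `1 ≤ ‖M⁻¹‖ dᵢ`. The symplectic matrix `(S⁻¹)ᵀ` brings
`M⁻¹` to the form `diag(D⁻¹, D⁻¹)`, so the same argument gives `1 ≤ ‖M‖ / dᵢ`. -/

open scoped Matrix.Norms.L2Operator RealInnerProductSpace

theorem opNorm_eq_l2_opNorm {𝕜 ι : Type*} [RCLike 𝕜] [Fintype ι] [DecidableEq ι]
    (A : Matrix ι ι 𝕜) : opNorm A = ‖A‖ :=
  rfl

namespace Matrix

variable {ι : Type*} [Fintype ι]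

theorem PosSemidef.dotProduct_mulVec_sq_le {B : Matrix ι ι ℝ} (hB : B.PosSemidef)
    (x y : ι → ℝ) :
    (x ⬝ᵥ B *ᵥ y) ^ 2 ≤ (x ⬝ᵥ B *ᵥ x) * (y ⬝ᵥ B *ᵥ y) := by
  let _ := B.toSeminormedAddCommGroup hB
  let _ := B.toInnerProductSpace hB
  have h := real_inner_mul_inner_self_le x y
  have e : ∀ u v : ι → ℝ, ⟪u, v⟫ = u ⬝ᵥ B *ᵥ v := fun u v => by
    rw [dotProduct_comm]; rfl
  rw [e, e, e] at h
  rwa [sq]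

variable [DecidableEq ι]

theorem dotProduct_mulVec_le_l2_opNorm_mul (A : Matrix ι ι ℝ) (x : ι → ℝ) :
    x ⬝ᵥ A *ᵥ x ≤ ‖A‖ * (x ⬝ᵥ x) := by
  have hx : x ⬝ᵥ x = ‖WithLp.toLp 2 x‖ ^ 2 := by
    rw [← real_inner_self_eq_norm_sq, EuclideanSpace.inner_toLp_toLp]; simp
  calc x ⬝ᵥ A *ᵥ x = ⟪WithLp.toLp 2 x, WithLp.toLp 2 (A *ᵥ x)⟫ := by
        rw [EuclideanSpace.inner_toLp_toLp, dotProduct_comm]; simp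
    _ ≤ ‖WithLp.toLp 2 x‖ * ‖WithLp.toLp 2 (A *ᵥ x)‖ := real_inner_le_norm _ _
    _ ≤ ‖WithLp.toLp 2 x‖ * (‖A‖ * ‖WithLp.toLp 2 x‖) := by
        gcongr; exact A.l2_opNorm_mulVec (WithLp.toLp 2 x)
    _ = ‖A‖ * (x ⬝ᵥ x) := by rw [hx]; ring

theorem PosDef.dotProduct_self_le_l2_opNorm_inv_mul {M : Matrix ι ι ℝ} (hM : M.PosDef)
    (x : ι → ℝ) : x ⬝ᵥ x ≤ ‖M⁻¹‖ * (x ⬝ᵥ M *ᵥ x) := by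
  have := hM.isUnit.invertible
  have hx : M⁻¹ *ᵥ (M *ᵥ x) = x := by rw [mulVec_mulVec, inv_mul_of_invertible, one_mulVec]
  -- Cauchy–Schwarz for the inner product of `M⁻¹`, applied to `x` and `M x`
  have hcs := hM.inv.posSemidef.dotProduct_mulVec_sq_le x (M *ᵥ x)
  rw [hx, dotProduct_comm (M *ᵥ x) x] at hcs
  have hinv := dotProduct_mulVec_le_l2_opNorm_mul M⁻¹ x
  have hMx : 0 ≤ x ⬝ᵥ M *ᵥ x := by simpa using hM.posSemidef.dotProduct_mulVec_nonneg x
  have hnorm : 0 ≤ ‖M⁻¹‖ * (x ⬝ᵥ M *ᵥ x) := mul_nonneg (norm_nonneg _) hMx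
  nlinarith

end Matrix

section Symplectic

variable {n : ℕ}

theorem symplJ_eq_neg_J : symplJ n = -J (Fin n) ℝ := by
  simp [symplJ, J, fromBlocks_neg]

theorem transpose_symplJ_mul_symplJ : (symplJ n)ᵀ * symplJ n = 1 := by
  simp [symplJ_eq_neg_J, J_transpose, J_squared]

theorem isSymplectic_iff_mem_symplecticGroup {S : Matrix (Fin n ⊕ Fin n) (Fin n ⊕ Fin n) ℝ} :
    IsSymplectic S ↔ S ∈ symplecticGroup (Fin n) ℝ := by
  rw [SymplecticGroup.mem_iff', IsSymplectic, symplJ_eq_neg_J, Matrix.mul_neg, Matrix.neg_mul,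
    neg_inj]

theorem IsSymplectic.inv_transpose {S : Matrix (Fin n ⊕ Fin n) (Fin n ⊕ Fin n) ℝ}
    (hS : IsSymplectic S) : IsSymplectic S⁻¹ᵀ := by
  rw [isSymplectic_iff_mem_symplecticGroup] at hS ⊢
  refine SymplecticGroup.transpose_mem ?_
  rw [← SymplecticGroup.coe_inv' ⟨S, hS⟩]
  exact SetLike.coe_mem _

theorem sq_dotProduct_symplJ_mulVec_le (u v : Fin n ⊕ Fin n → ℝ) :
    (u ⬝ᵥ symplJ n *ᵥ v) ^ 2 ≤ (u ⬝ᵥ u) * (v ⬝ᵥ v) := by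
  have h := PosSemidef.one.dotProduct_mulVec_sq_le u (symplJ n *ᵥ v)
  have hσ : (symplJ n *ᵥ v) ⬝ᵥ (symplJ n *ᵥ v) = v ⬝ᵥ v := by
    rw [dotProduct_mulVec, ← mulVec_transpose, mulVec_mulVec, transpose_symplJ_mul_symplJ,
      one_mulVec]
  rwa [one_mulVec, one_mulVec, hσ] at h

theorem Dtilde_eq_diagonal (d : Fin n → ℝ) : Dtilde d = diagonal (Sum.elim d d) :=
  fromBlocks_diagonal d d

theorem inv_Dtilde {d : Fin n → ℝ} (hd : ∀ i, d i ≠ 0) : (Dtilde d)⁻¹ = Dtilde d⁻¹ := by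
  refine inv_eq_left_inv ?_
  rw [Dtilde_eq_diagonal, Dtilde_eq_diagonal, diagonal_mul_diagonal, ← diagonal_one]
  congr 1
  ext (i | i) <;> exact inv_mul_cancel₀ (hd i)

theorem l2_opNorm_Dtilde (d : Fin n → ℝ) : ‖Dtilde d‖ = ‖d‖ := by
  rw [Dtilde_eq_diagonal, l2_opNorm_diagonal]
  refine le_antisymm ((pi_norm_le_iff_of_nonneg (norm_nonneg d)).mpr ?_)
    ((pi_norm_le_iff_of_nonneg (norm_nonneg _)).mpr fun i => ?_)
  · rintro (i | i) <;> exact norm_le_pi_norm d i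
  · exact norm_le_pi_norm (Sum.elim d d) (Sum.inl i)

theorem williamson_inv {M S : Matrix (Fin n ⊕ Fin n) (Fin n ⊕ Fin n) ℝ} {d : Fin n → ℝ}
    (hW : Sᵀ * M * S = Dtilde d) (hd : ∀ i, d i ≠ 0) :
    S⁻¹ᵀᵀ * M⁻¹ * S⁻¹ᵀ = Dtilde d⁻¹ := by
  rw [transpose_transpose, transpose_nonsing_inv, ← inv_Dtilde hd, ← hW, Matrix.mul_inv_rev,
    Matrix.mul_inv_rev, Matrix.mul_assoc]

theorem one_le_l2_opNorm_inv_mul_of_williamson {M S : Matrix (Fin n ⊕ Fin n) (Fin n ⊕ Fin n) ℝ}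
    {d : Fin n → ℝ} (hM : M.PosDef) (hS : IsSymplectic S) (hW : Sᵀ * M * S = Dtilde d)
    (i : Fin n) : 1 ≤ ‖M⁻¹‖ * d i := by
  set u := Sᵀ (Sum.inl i)
  set v := Sᵀ (Sum.inr i)
  have hMu : u ⬝ᵥ M *ᵥ u = d i := by rw [← mul_mul_apply, hW]; simp [Dtilde]
  have hMv : v ⬝ᵥ M *ᵥ v = d i := by rw [← mul_mul_apply, hW]; simp [Dtilde]
  have hσ : u ⬝ᵥ symplJ n *ᵥ v = 1 := by rw [← mul_mul_apply, hS]; simp [symplJ]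
  have hu : u ⬝ᵥ u ≤ ‖M⁻¹‖ * d i := hMu ▸ hM.dotProduct_self_le_l2_opNorm_inv_mul u
  have hv : v ⬝ᵥ v ≤ ‖M⁻¹‖ * d i := hMv ▸ hM.dotProduct_self_le_l2_opNorm_inv_mul v
  have hc : 0 ≤ ‖M⁻¹‖ * d i := (dotProduct_self_star_nonneg u).trans hu
  refine (pow_le_pow_iff_left₀ zero_le_one hc two_ne_zero).mp ?_
  calc (1 : ℝ) ^ 2 = (u ⬝ᵥ symplJ n *ᵥ v) ^ 2 := by rw [hσ]
    _ ≤ (u ⬝ᵥ u) * (v ⬝ᵥ v) := sq_dotProduct_symplJ_mulVec_le u v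
    _ ≤ (‖M⁻¹‖ * d i) ^ 2 := by
      rw [sq]; exact mul_le_mul hu hv (dotProduct_self_star_nonneg v) hc

end Symplectic

theorem symplectic_eigenvalue_bounds_general (n : ℕ)
    (M S : Matrix (Fin n ⊕ Fin n) (Fin n ⊕ Fin n) ℝ) (d : Fin n → ℝ)
    (hM : M.PosDef) (hS : IsSymplectic S)
    (hW : Sᵀ * M * S = Dtilde d) :
    (∀ i, d i ≤ opNorm M) ∧ (∀ i, 1 / opNorm M⁻¹ ≤ d i) ∧
      opNorm (Dtilde d) ≤ opNorm M ∧ opNorm (Dtilde d)⁻¹ ≤ opNorm M⁻¹ := by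
  simp only [opNorm_eq_l2_opNorm]
  have hlower : ∀ i, 1 ≤ ‖M⁻¹‖ * d i := one_le_l2_opNorm_inv_mul_of_williamson hM hS hW
  have hd : ∀ i, 0 < d i := fun i =>
    pos_of_mul_pos_right (one_pos.trans_le (hlower i)) (norm_nonneg _)
  have hupper : ∀ i, 1 ≤ ‖M‖ * (d i)⁻¹ := by
    have := hM.isUnit.invertible
    simpa only [inv_inv_of_invertible, Pi.inv_apply] using
      one_le_l2_opNorm_inv_mul_of_williamson hM.inv hS.inv_transpose
        (williamson_inv hW fun i => (hd i).ne')
  have hd_le : ∀ i, d i ≤ ‖M‖ := fun i => by simpa using (le_mul_inv_iff₀ (hd i)).1 (hupper i)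
  have hd_inv_le : ∀ i, (d i)⁻¹ ≤ ‖M⁻¹‖ := fun i => (inv_le_iff_one_le_mul₀ (hd i)).2 (hlower i)
  refine ⟨hd_le, fun i => one_div ‖M⁻¹‖ ▸ inv_le_of_inv_le₀ (hd i) (hd_inv_le i), ?_, ?_⟩
  · rw [l2_opNorm_Dtilde]
    exact (pi_norm_le_iff_of_nonneg (norm_nonneg M)).2 fun i =>
      (Real.norm_of_nonneg (hd i).le).trans_le (hd_le i)
  · rw [inv_Dtilde fun i => (hd i).ne', l2_opNorm_Dtilde]
    exact (pi_norm_le_iff_of_nonneg (norm_nonneg M⁻¹)).2 fun i =>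
      (Real.norm_of_nonneg (inv_pos.2 (hd i)).le).trans_le (hd_inv_le i)

/-- **Bounds on the symplectic eigenvalues.**  If `M` is positive definite with
symplectic eigenvalues `d₁ ≥ … ≥ dₙ > 0`, then every `dᵢ ≤ ‖M‖∞` and every
`dᵢ ≥ 1/‖M⁻¹‖∞`; equivalently `‖D̃‖∞ ≤ ‖M‖∞` and `‖D̃⁻¹‖∞ ≤ ‖M⁻¹‖∞` for the
Williamson diagonal form `D̃ = diag(D,D)`. -/
theorem symplectic_eigenvalue_bounds (n : ℕ)
    (M S : Matrix (Fin n ⊕ Fin n) (Fin n ⊕ Fin n) ℝ) (d : Fin n → ℝ)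
    (hM : M.PosDef) (hS : IsSymplectic S)
    (hd : ∀ i, 0 < d i) (hmono : Antitone d)
    (hW : Sᵀ * M * S = Dtilde d) :
    (∀ i, d i ≤ opNorm M) ∧ (∀ i, 1 / opNorm M⁻¹ ≤ d i) ∧
      opNorm (Dtilde d) ≤ opNorm M ∧ opNorm (Dtilde d)⁻¹ ≤ opNorm M⁻¹ :=
  symplectic_eigenvalue_bounds_general n M S d hM hS hW
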